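/- arXiv:1908.00311 — 7 statements merged into one kernel-verified Lean document; each statement's English description precedes it below -/
import Mathlib

section
/- The following are equivalent: (1) for every integer n ≥ 1 there exists k with T^k(n) = 1; (2) for every integer n ≥ 1 with n ≡ 2 (mod 3) there exists k with F^k(n) = 2. -/
/-- The Collatz function. -/
def T (n : ℤ) : ℤ := if n % 2 = 0 then n / 2 else (3 * n + 1) / 2

/-- The map `F`, defined on integers congruent to 2 (mod 3):
`F n = T n` if `n ≡ 5 (mod 6)` and `F n = T (T n)` if `n ≡ 2 (mod 6)`. -/
def F (n : ℤ) : ℤ := if n % 6 = 5 then T n else T (T n)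

/-!
`F` only skips steps of the `T`-orbit, so `F`-orbits are subsequences of `T`-orbits. Since `F`
preserves the class `2 (mod 3)` and the `T`-orbit of `1` is the cycle `1 → 2 → 1`, an `F`-orbit
passing through the `T`-orbit of `1` must hit `2`. Conversely, an odd `n ≥ 1` is sent by `T` into
the domain of `F`, and reaching `2` means reaching `1` one step later; even numbers are halved
until they become odd.
-/

open Function Set

lemma T_of_even {n : ℤ} (h : n % 2 = 0) : T n = n / 2 := by
  simp [T, h]

lemma T_of_odd {n : ℤ} (h : n % 2 = 1) : T n = 3 * (n / 2) + 2 := by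
  simp only [T, h]
  omega

lemma T_mapsTo_one_two : MapsTo T {1, 2} {1, 2} := by
  rintro n (rfl | rfl) <;> decide

lemma F_mapsTo_mod_three : MapsTo F {n | n % 3 = 2} {n | n % 3 = 2} := by
  intro n (h : n % 3 = 2)
  show F n % 3 = 2
  unfold F T
  split_ifs <;> omega

lemma F_eq_T_or_F_eq_T_T (n : ℤ) : F n = T n ∨ F n = T (T n) := by
  unfold F
  split_ifs
  exacts [Or.inl rfl, Or.inr rfl]

lemma exists_iterate_F_eq_iterate_T (n : ℤ) (k : ℕ) : ∃ m, k ≤ m ∧ F^[k] n = T^[m] n := by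
  induction k with
  | zero => exact ⟨0, le_rfl, rfl⟩
  | succ k ih =>
    obtain ⟨m, hkm, hm⟩ := ih
    rw [iterate_succ_apply', hm]
    rcases F_eq_T_or_F_eq_T_T (T^[m] n) with h | h
    · exact ⟨m + 1, by omega, by rw [h, iterate_succ_apply']⟩
    · exact ⟨m + 2, by omega, by rw [h, iterate_succ_apply', iterate_succ_apply']⟩

lemma iterate_F_eq_two_of_iterate_T_eq_one {n : ℤ} (hn : n % 3 = 2) {m : ℕ}
    (hm : T^[m] n = 1) : F^[m] n = 2 := by
  obtain ⟨M, hmM, hM⟩ := exists_iterate_F_eq_iterate_T n m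
  have hcycle : F^[m] n ∈ ({1, 2} : Set ℤ) := by
    rw [hM, ← Nat.sub_add_cancel hmM, iterate_add_apply, hm]
    exact T_mapsTo_one_two.iterate _ (by simp)
  have hmod : F^[m] n % 3 = 2 := F_mapsTo_mod_three.iterate m (show n ∈ {n | n % 3 = 2} from hn)
  rcases hcycle with h | h
  · rw [h] at hmod
    omega
  · exact h

lemma exists_iterate_T_eq_one_of_iterate_F_eq_two {n : ℤ} {k : ℕ} (hk : F^[k] n = 2) :
    ∃ m, T^[m] n = 1 := by
  obtain ⟨m, -, hm⟩ := exists_iterate_F_eq_iterate_T n k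
  exact ⟨m + 1, by rw [iterate_succ_apply', ← hm, hk]; decide⟩

lemma exists_iterate_T_eq_one_of_forall_F
    (H : ∀ n : ℤ, 1 ≤ n → n % 3 = 2 → ∃ k : ℕ, F^[k] n = 2) (n : ℤ) (hn : 1 ≤ n) :
    ∃ k : ℕ, T^[k] n = 1 := by
  rcases Int.emod_two_eq_zero_or_one n with h | h
  · obtain ⟨k, hk⟩ := exists_iterate_T_eq_one_of_forall_F H (n / 2) (by omega)
    exact ⟨k + 1, by rw [iterate_succ_apply, T_of_even h, hk]⟩
  · obtain ⟨k, hk⟩ := H (T n) (by rw [T_of_odd h]; omega) (by rw [T_of_odd h]; omega)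
    obtain ⟨m, hm⟩ := exists_iterate_T_eq_one_of_iterate_F_eq_two hk
    exact ⟨m + 1, by rw [iterate_succ_apply, hm]⟩
termination_by n.toNat
decreasing_by omega

theorem stmt_4 :
    (∀ n : ℤ, 1 ≤ n → ∃ k : ℕ, T^[k] n = 1) ↔
      (∀ n : ℤ, 1 ≤ n → n % 3 = 2 → ∃ k : ℕ, F^[k] n = 2) := by
  constructor
  · intro H n hn hmod
    obtain ⟨m, hm⟩ := H n hn
    exact ⟨m, iterate_F_eq_two_of_iterate_T_eq_one hmod hm⟩
  · exact exists_iterate_T_eq_one_of_forall_F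
end

section
/- For every integer n, F(3n + 2) = 3·T_R(n) + 2. That is, T_R is conjugate to F via the bijection S(n) = 3n + 2 from ℤ onto the set of integers congruent to 2 (mod 3). -/
/-- The refined map `T_R`. -/
def TR (n : ℤ) : ℤ :=
  if n % 4 = 0 then 3 * n / 4
  else if n % 4 = 2 then (n - 2) / 4
  else (3 * n + 1) / 2

/-! Writing `n = 4k`, `4k + 2` or `2k + 1`, the point `3n + 2` is `2(2·3k + 1)`, `2·2(3k + 2)`
or `2(3k + 2) + 1`, and `T` acts on `2m` and `2m + 1` by `m ↦ m` and `m ↦ 3m + 2`. -/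

theorem T_two_mul (m : ℤ) : T (2 * m) = m := by
  simp only [T]
  split_ifs <;> omega

theorem T_two_mul_add_one (m : ℤ) : T (2 * m + 1) = 3 * m + 2 := by
  simp only [T]
  split_ifs <;> omega

theorem F_of_emod_six_ne_five {n : ℤ} (h : n % 6 ≠ 5) : F n = T (T n) :=
  if_neg h

theorem F_of_emod_six_eq_five {n : ℤ} (h : n % 6 = 5) : F n = T n :=
  if_pos h

theorem TR_four_mul (k : ℤ) : TR (4 * k) = 3 * k := by
  simp only [TR]
  split_ifs <;> omega

theorem TR_four_mul_add_two (k : ℤ) : TR (4 * k + 2) = k := by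
  simp only [TR]
  split_ifs <;> omega

theorem TR_two_mul_add_one (k : ℤ) : TR (2 * k + 1) = 3 * k + 2 := by
  simp only [TR]
  split_ifs <;> omega

theorem stmt_6 (n : ℤ) : F (3 * n + 2) = 3 * TR n + 2 := by
  obtain ⟨k, rfl | rfl⟩ | ⟨k, rfl⟩ : (∃ k, n = 4 * k ∨ n = 4 * k + 2) ∨ ∃ k, n = 2 * k + 1 := by
    rcases Int.even_or_odd' n with ⟨m, rfl | rfl⟩
    · exact .inl ⟨m / 2, by omega⟩
    · exact .inr ⟨m, rfl⟩
  · rw [F_of_emod_six_ne_five (by omega), TR_four_mul,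
      show 3 * (4 * k) + 2 = 2 * (2 * (3 * k) + 1) by ring, T_two_mul, T_two_mul_add_one]
  · rw [F_of_emod_six_ne_five (by omega), TR_four_mul_add_two,
      show 3 * (4 * k + 2) + 2 = 2 * (2 * (3 * k + 2)) by ring, T_two_mul, T_two_mul]
  · rw [F_of_emod_six_eq_five (by omega), TR_two_mul_add_one,
      show 3 * (2 * k + 1) + 2 = 2 * (3 * k + 2) + 1 by ring, T_two_mul_add_one]
end

section
/- For every integer n and every natural number k, 3·T_R^k(n) + 2 = F^k(3n + 2). That is, S ∘ T_R^k = F^k ∘ S where S(n) = 3n + 2. -/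
/- By residue of `n` mod 4: `n = 4m` gives `12m + 2 ↦ 6m + 1 ↦ 9m + 2`, `n = 4m + 2` gives
`12m + 8 ↦ 6m + 4 ↦ 3m + 2`, and odd `n` gives `3n + 2 ≡ 5 (mod 6)`, where `F` is one step of `T`. -/
theorem semiconj_TR_F : Function.Semiconj (fun n : ℤ => 3 * n + 2) TR F := by
  intro n
  simp only [TR, F, T]
  split_ifs <;> omega

theorem stmt_7 (n : ℤ) (k : ℕ) : 3 * TR^[k] n + 2 = F^[k] (3 * n + 2) :=
  semiconj_TR_F.iterate_right k n
end

section
/- For every integer n, there exists a natural number K such that (T_R^*)^k(n) ≡ 1 (mod 3) for all k < K, and (T_R^*)^k(n) ≡ 0 or 2 (mod 3) for all k ≥ K. That is, every T_R^*-trajectory consists of finitely many numbers congruent to 1 (mod 3) followed only by numbers congruent to 0 or 2 (mod 3). -/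
/-- The accelerated refined map `T_R^*`. -/
def TRstar (n : ℤ) : ℤ :=
  if n % 2 = 1 then (3 * n + 1) / 2
  else if n % 4 = 0 then 3 * n / 4
  else if n % 8 = 6 then (3 * n - 2) / 8
  else if n % 16 = 2 then (3 * n - 6) / 16
  else if n % 32 = 26 then (3 * n - 14) / 32
  else if n % 64 = 10 then (3 * n - 30) / 64
  else (n - 42) / 64

/-!
The classes `0` and `2` mod `3` are closed under `T_R^*`. Moreover every branch of `T_R^*`
except `n ↦ (n - 42) / 64` sends the class `1` into the classes `0` or `2`, and that branch
strictly decreases `|n|`. Hence a trajectory stays in the class `1` only finitely long, and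
once it has left it never returns.
-/

theorem Function.exists_iterate_notMem_lt_and_mem_ge {α : Type*} {f : α → α} {s : Set α}
    (hs : Set.MapsTo f s s) {x : α} (h : ∃ k, f^[k] x ∈ s) :
    ∃ K, (∀ k < K, f^[k] x ∉ s) ∧ ∀ k ≥ K, f^[k] x ∈ s := by
  classical
  refine ⟨Nat.find h, fun k hk => Nat.find_min h hk, fun k hk => ?_⟩
  obtain ⟨m, rfl⟩ := Nat.exists_eq_add_of_le hk
  rw [add_comm, Function.iterate_add_apply]
  exact hs.iterate m (Nat.find_spec h)

theorem TRstar_mapsTo_mod_three_ne_one :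
    Set.MapsTo TRstar {n | n % 3 ≠ 1} {n | n % 3 ≠ 1} := by
  intro n hn
  simp only [Set.mem_ofPred_eq, TRstar] at hn ⊢
  split_ifs <;> omega

theorem TRstar_eq_of_mod_three_eq_one {n : ℤ} (hn : n % 3 = 1) (h : TRstar n % 3 = 1) :
    n % 64 = 42 ∧ TRstar n = (n - 42) / 64 := by
  unfold TRstar at *
  split_ifs at * <;> omega

theorem natAbs_TRstar_lt {n : ℤ} (hn : n % 3 = 1) (h : TRstar n % 3 = 1) :
    (TRstar n).natAbs < n.natAbs := by
  obtain ⟨hn64, hT⟩ := TRstar_eq_of_mod_three_eq_one hn h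
  omega

theorem exists_iterate_TRstar_mod_three_ne_one (n : ℤ) : ∃ k, TRstar^[k] n % 3 ≠ 1 := by
  by_cases hn : n % 3 = 1
  · by_cases h : TRstar n % 3 = 1
    · have := natAbs_TRstar_lt hn h
      obtain ⟨k, hk⟩ := exists_iterate_TRstar_mod_three_ne_one (TRstar n)
      exact ⟨k + 1, hk⟩
    · exact ⟨1, h⟩
  · exact ⟨0, hn⟩
termination_by n.natAbs

theorem stmt_13 (n : ℤ) :
    ∃ K : ℕ, (∀ k < K, TRstar^[k] n % 3 = 1) ∧
      (∀ k ≥ K, TRstar^[k] n % 3 = 0 ∨ TRstar^[k] n % 3 = 2) := by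
  obtain ⟨K, hlt, hge⟩ := Function.exists_iterate_notMem_lt_and_mem_ge
    TRstar_mapsTo_mod_three_ne_one (exists_iterate_TRstar_mod_three_ne_one n)
  refine ⟨K, fun k hk => not_not.mp (hlt k hk), fun k hk => ?_⟩
  have : TRstar^[k] n % 3 ≠ 1 := hge k hk
  omega
end

section
/- If n is an integer with n ≡ 1 (mod 3) and T_R^*(n) ≡ 1 (mod 3), then n ≡ 106 (mod 192) and |T_R^*(n)| < |n|. -/
lemma emod_64_eq_42_of_TRstar_emod_three {n : ℤ} (h1 : n % 3 = 1) (h2 : TRstar n % 3 = 1) :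
    n % 64 = 42 := by
  unfold TRstar at h2
  split_ifs at h2 <;> omega

lemma TRstar_of_emod_64_eq_42 {n : ℤ} (h : n % 64 = 42) : TRstar n = (n - 42) / 64 := by
  unfold TRstar
  rw [if_neg (by omega), if_neg (by omega), if_neg (by omega), if_neg (by omega),
    if_neg (by omega), if_neg (by omega)]

lemma abs_sub_42_ediv_64_lt_abs {n : ℤ} (h : n % 64 = 42) : |(n - 42) / 64| < |n| := by
  obtain ⟨k, rfl⟩ : ∃ k, n = 64 * k + 42 := ⟨n / 64, by omega⟩
  rw [show (64 * k + 42 - 42) / 64 = k by omega]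
  rcases abs_cases k with ⟨hk, _⟩ | ⟨hk, _⟩ <;>
    rcases abs_cases (64 * k + 42) with ⟨hn, _⟩ | ⟨hn, _⟩ <;> rw [hk, hn] <;> omega

theorem stmt_14 (n : ℤ) (h1 : n % 3 = 1) (h2 : TRstar n % 3 = 1) :
    n % 192 = 106 ∧ |TRstar n| < |n| := by
  have h64 := emod_64_eq_42_of_TRstar_emod_three h1 h2
  rw [TRstar_of_emod_64_eq_42 h64]
  exact ⟨by omega, abs_sub_42_ediv_64_lt_abs h64⟩
end

section
/- For every integer n with n ≡ 5 (mod 9), one has F(n) ≢ 5 (mod 9). That is, numbers congruent to 5 (mod 9) never appear consecutively in an F-trajectory. -/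
/-- If `n ≡ 5 (mod 18)` then `F n = T n ≡ 8 (mod 9)`; if `n ≡ 14 (mod 18)` then `T n ≡ 7 (mod 9)`,
and one more step of `T` lands in `8` or `2` (mod 9) according to the parity of `T n`. -/
theorem F_mod_nine_of_mod_nine_eq_five {n : ℤ} (hn : n % 9 = 5) : F n % 9 = 8 ∨ F n % 9 = 2 := by
  unfold F T
  split_ifs <;> omega

theorem stmt_16 (n : ℤ) (hn : n % 9 = 5) : F n % 9 ≠ 5 := by
  rcases F_mod_nine_of_mod_nine_eq_five hn with h | h <;> omega
end

section
/- For every integer n with n ≡ 2 (mod 3), there exists a natural number K such that (T^*)^k(n) ≡ 5 (mod 9) for all k < K, and (T^*)^k(n) ≡ 2 or 8 (mod 9) for all k ≥ K. That is, every T^*-trajectory consists of finitely many numbers congruent to 5 (mod 9) followed only by numbers congruent to 2 or 8 (mod 9). -/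
/-- The accelerated Collatz map `T^*`, defined on integers congruent to 2 (mod 3). -/
def Tstar (n : ℤ) : ℤ :=
  if n % 6 = 5 then (3 * n + 1) / 2
  else if n % 12 = 2 then (3 * n + 2) / 4
  else if n % 24 = 20 then (3 * n + 4) / 8
  else if n % 48 = 8 then (3 * n + 8) / 16
  else if n % 96 = 80 then (3 * n + 16) / 32
  else if n % 192 = 32 then (3 * n + 32) / 64
  else n / 64

/-!
Since `64 ≡ 1 (mod 9)`, every branch of `T^*` except the last sends a number `≡ 2 (mod 3)` to a
number `≡ 2` or `8 (mod 9)`, while the last branch `n ↦ n / 64` preserves the residue mod 9.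
Hence the residues `2, 8` are absorbing, and a number `≡ 5 (mod 9)` can only stay in that class
by being divided by 64, which cannot go on forever for a nonzero integer.
-/

lemma Tstar_mod_nine (n : ℤ) (hn : n % 3 = 2) :
    (Tstar n % 9 = 2 ∨ Tstar n % 9 = 8) ∨ n = 64 * Tstar n := by
  unfold Tstar
  split_ifs <;> omega

lemma Tstar_mod_three (n : ℤ) (hn : n % 3 = 2) : Tstar n % 3 = 2 := by
  have := Tstar_mod_nine n hn
  omega

lemma iterate_Tstar_mod_three (n : ℤ) (hn : n % 3 = 2) (k : ℕ) : Tstar^[k] n % 3 = 2 := by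
  induction k with
  | zero => exact hn
  | succ k ih => rw [Function.iterate_succ_apply']; exact Tstar_mod_three _ ih

lemma Tstar_mod_nine_of_mod_nine (n : ℤ) (hn : n % 3 = 2) (h : n % 9 = 2 ∨ n % 9 = 8) :
    Tstar n % 9 = 2 ∨ Tstar n % 9 = 8 := by
  have := Tstar_mod_nine n hn
  omega

lemma Int.not_forall_eq_mul_succ {f : ℕ → ℤ} {b : ℤ} (hb : b.natAbs ≠ 1) (h0 : f 0 ≠ 0) :
    ¬ ∀ k, f k = b * f (k + 1) := by
  intro h
  have hpow : ∀ k, f 0 = b ^ k * f k := by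
    intro k
    induction k with
    | zero => simp
    | succ k ih => rw [ih, h k, pow_succ, mul_assoc]
  obtain ⟨k, hk⟩ := Int.finiteMultiplicity_iff.mpr ⟨hb, h0⟩
  exact hk (hpow (k + 1) ▸ dvd_mul_right _ _)

theorem stmt_18 (n : ℤ) (hn : n % 3 = 2) :
    ∃ K : ℕ, (∀ k < K, Tstar^[k] n % 9 = 5) ∧
      (∀ k ≥ K, Tstar^[k] n % 9 = 2 ∨ Tstar^[k] n % 9 = 8) := by
  have hex : ∃ k : ℕ, Tstar^[k] n % 9 ≠ 5 := by
    by_contra! hall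
    refine Int.not_forall_eq_mul_succ (f := fun k ↦ Tstar^[k] n) (b := 64) (by decide)
      (by simp only [Function.iterate_zero, id]; omega) fun k ↦ ?_
    have hnext := hall (k + 1)
    rw [Function.iterate_succ_apply'] at hnext ⊢
    have hstep := Tstar_mod_nine _ (iterate_Tstar_mod_three n hn k)
    omega
  refine ⟨Nat.find hex, fun k hk ↦ not_not.mp (Nat.find_min hex hk), fun k hk ↦ ?_⟩
  induction k, hk using Nat.le_induction with
  | base =>
    have hne := Nat.find_spec hex
    have hmod := iterate_Tstar_mod_three n hn (Nat.find hex)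
    omega
  | succ k _ ih =>
    rw [Function.iterate_succ_apply']
    exact Tstar_mod_nine_of_mod_nine _ (iterate_Tstar_mod_three n hn k) ih
end
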